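/- For every fixed λ ≥ 1, the limit as n → ∞ of (1/S_n) times the sum over (λ+1)-tuples of nonnegative integers (i_1, ..., i_{λ+1}) with i_1 + ... + i_{λ+1} = n - λ of S_{i_1} * ... * S_{i_{λ+1}} equals (λ+1)/2^λ. -/

import Mathlib

/-!
The compositions sum is the coefficient of `X^(n-l)` in `C(X)^(l+1)`, where `C = 1 + X C²` is
the Catalan generating function. From `C^(k+1) = C^k + X C^(k+2)` and Pascal's rule these
coefficients are the ballot numbers, so the sum equals `(l+1)/(n+1) · C(2n-l, n-l)`. Dividing by
`S_n = C(2n, n)/(n+1)` leaves `(l+1) · n(n-1)⋯(n-l+1) / (2n(2n-1)⋯(2n-l+1))`, which tends to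
`(l+1)/2^l`.
-/

/-- The n-th Catalan number S_n = (1/(n+1)) * C(2n, n). -/
def S (n : ℕ) : ℕ := Nat.choose (2 * n) n / (n + 1)

open Finset PowerSeries Filter Asymptotics Topology

theorem PowerSeries.coeff_pow_eq_sum_antidiagonalTuple {R : Type*} [CommSemiring R] (φ : R⟦X⟧)
    (k n : ℕ) :
    coeff n (φ ^ k) = ∑ f ∈ Nat.antidiagonalTuple k n, ∏ i, coeff (f i) φ := by
  have h := coeff_prod (fun _ : Fin k => φ) n univ
  rw [prod_const, card_univ, Fintype.card_fin] at h
  rw [h, ← piAntidiag_univ_fin_eq_antidiagonalTuple, finsuppAntidiag, sum_map]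
  exact sum_attach (piAntidiag univ n) fun f => ∏ i, coeff (f i) φ

theorem PowerSeries.catalanSeries_pow_succ (k : ℕ) :
    catalanSeries ^ (k + 1) = catalanSeries ^ k + X * catalanSeries ^ (k + 2) := by
  calc catalanSeries ^ (k + 1) = catalanSeries ^ k * (catalanSeries ^ 2 * X + 1) := by
        rw [catalanSeries_sq_mul_X_add_one, pow_succ]
    _ = _ := by ring

/-- The ballot numbers `k / (2m + k) * C(2m + k, m)`, written as a difference of binomial
coefficients so that Pascal's rule yields the recurrence of the powers of `catalanSeries`. -/
def ballot (k : ℕ) : ℕ → ℤ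
  | 0 => 1
  | m + 1 => (2 * m + k + 1).choose (m + 1) - (2 * m + k + 1).choose m

theorem ballot_add_two (k m : ℕ) :
    ballot (k + 2) m = ballot (k + 1) (m + 1) - ballot k (m + 1) := by
  cases m with
  | zero => simp [ballot]
  | succ m =>
    simp only [ballot]
    rw [show 2 * (m + 1) + (k + 1) + 1 = 2 * m + k + 3 + 1 by ring,
      show 2 * (m + 1) + k + 1 = 2 * m + k + 3 by ring,
      show 2 * m + (k + 2) + 1 = 2 * m + k + 3 by ring,
      Nat.choose_succ_succ (2 * m + k + 3) (m + 1), Nat.choose_succ_succ (2 * m + k + 3) m]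
    push_cast
    ring

theorem ballot_succ_mul (k m : ℕ) :
    ballot (k + 1) m * (m + k + 1) = (k + 1) * (2 * m + k).choose m := by
  cases m with
  | zero => simp [ballot]
  | succ m =>
    have h := Nat.choose_succ_right_eq (2 * m + k + 2) m
    rw [show 2 * m + k + 2 - m = m + k + 2 by omega] at h
    zify at h
    simp only [ballot, show 2 * m + (k + 1) + 1 = 2 * m + k + 2 by ring,
      show 2 * (m + 1) + k = 2 * m + k + 2 by ring]
    push_cast
    linear_combination h

theorem ballot_one (m : ℕ) : ballot 1 m = catalan m := by
  have h := ballot_succ_mul 0 m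
  have hc := succ_mul_catalan_eq_centralBinom m
  rw [Nat.centralBinom_eq_two_mul_choose] at hc
  simp only [zero_add, CharP.cast_eq_zero, add_zero, one_mul] at h
  refine mul_right_cancel₀ (b := (m + 1 : ℤ)) (by positivity) ?_
  rw [h, ← hc]
  push_cast
  ring

theorem coeff_catalanSeries_pow (k m : ℕ) :
    ((coeff m (catalanSeries ^ k) : ℕ) : ℤ) = ballot k m := by
  induction k using Nat.twoStepInduction generalizing m with
  | zero =>
    cases m with
    | zero => simp [ballot]
    | succ m => simp [ballot, Nat.choose_symm_half]
  | one => simp [ballot_one]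
  | more k ih₀ ih₁ =>
    have h := congrArg (coeff (m + 1)) (catalanSeries_pow_succ k)
    rw [map_add, coeff_succ_X_mul] at h
    rw [ballot_add_two, ← ih₀, ← ih₁, h]
    push_cast
    ring

theorem sum_prod_catalan_mul (k m : ℕ) :
    (∑ f ∈ Nat.antidiagonalTuple (k + 1) m, ∏ i, catalan (f i)) * (m + k + 1) =
      (k + 1) * (2 * m + k).choose m := by
  have h := ballot_succ_mul k m
  rw [← coeff_catalanSeries_pow, coeff_pow_eq_sum_antidiagonalTuple] at h
  simp only [catalanSeries_coeff] at h
  exact_mod_cast h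

theorem Nat.choose_mul_descFactorial {a b l : ℕ} (hlb : l ≤ b) :
    a.choose b * b.descFactorial l = a.descFactorial l * (a - l).choose (b - l) := by
  have h := congrArg (· * l.factorial) (Nat.choose_mul (n := a) hlb)
  simp only [Nat.descFactorial_eq_factorial_mul_choose] at h ⊢
  linear_combination h

theorem catalan_pos (n : ℕ) : 0 < catalan n := by
  have h := n.centralBinom_pos
  rw [← succ_mul_catalan_eq_centralBinom] at h
  exact Nat.pos_of_mul_pos_left h

theorem sum_prod_catalan_mul_descFactorial {l n : ℕ} (h : l ≤ n) :
    (∑ f ∈ Nat.antidiagonalTuple (l + 1) (n - l), ∏ i, catalan (f i)) * (2 * n).descFactorial l =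
      (l + 1) * catalan n * n.descFactorial l := by
  have hT := sum_prod_catalan_mul l (n - l)
  rw [show n - l + l + 1 = n + 1 by omega, show 2 * (n - l) + l = 2 * n - l by omega] at hT
  have hC := succ_mul_catalan_eq_centralBinom n
  rw [Nat.centralBinom_eq_two_mul_choose] at hC
  set T := ∑ f ∈ Nat.antidiagonalTuple (l + 1) (n - l), ∏ i, catalan (f i)
  refine Nat.eq_of_mul_eq_mul_right n.add_one_pos ?_
  calc T * (2 * n).descFactorial l * (n + 1)
      = (l + 1) * ((2 * n).descFactorial l * (2 * n - l).choose (n - l)) := by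
        rw [mul_right_comm, hT]; ring
    _ = (l + 1) * ((n + 1) * catalan n * n.descFactorial l) := by
        rw [← Nat.choose_mul_descFactorial h, hC]
    _ = _ := by ring

theorem sum_prod_catalan_div_catalan {l n : ℕ} (h : l ≤ n) :
    (∑ f ∈ Nat.antidiagonalTuple (l + 1) (n - l), ∏ i, (catalan (f i) : ℝ)) / catalan n =
      (l + 1) * ((n.descFactorial l : ℝ) / (2 * n).descFactorial l) := by
  have hid := congrArg (Nat.cast : ℕ → ℝ) (sum_prod_catalan_mul_descFactorial h)
  have hc : (catalan n : ℝ) ≠ 0 := by exact_mod_cast (catalan_pos n).ne'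
  have hd : ((2 * n).descFactorial l : ℝ) ≠ 0 := by
    exact_mod_cast (Nat.descFactorial_pos.2 (by omega)).ne'
  push_cast at hid
  field_simp
  linear_combination hid

theorem tendsto_descFactorial_div_descFactorial_two_mul (l : ℕ) :
    Tendsto (fun n : ℕ => (n.descFactorial l : ℝ) / (2 * n).descFactorial l) atTop
      (𝓝 (1 / 2 ^ l)) := by
  have h := (isEquivalent_descFactorial l).div ((isEquivalent_descFactorial l).comp_tendsto
    (tendsto_id.const_mul_atTop' two_pos))
  refine h.symm.tendsto_nhds (tendsto_const_nhds.congr' ?_)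
  filter_upwards [eventually_ne_atTop 0] with n hn
  have : (n : ℝ) ≠ 0 := by exact_mod_cast hn
  simp only [Pi.div_apply, Function.comp_apply, id, Nat.cast_mul, Nat.cast_ofNat, mul_pow]
  field_simp

theorem S_eq_catalan (n : ℕ) : S n = catalan n := by
  rw [catalan_eq_centralBinom_div, Nat.centralBinom, S]

theorem catalan_composition_sum_limit_general (l : ℕ) :
    Filter.Tendsto
      (fun n : ℕ =>
        (∑ f ∈ Finset.Nat.antidiagonalTuple (l + 1) (n - l), ∏ i, (S (f i) : ℝ)) / (S n : ℝ))
      Filter.atTop (nhds ((l + 1) / 2 ^ l)) := by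
  have h := (tendsto_descFactorial_div_descFactorial_two_mul l).const_mul ((l : ℝ) + 1)
  rw [mul_one_div] at h
  refine h.congr' ?_
  filter_upwards [eventually_ge_atTop l] with n hn
  simp only [S_eq_catalan, sum_prod_catalan_div_catalan hn]

theorem catalan_composition_sum_limit (l : ℕ) (hl : 1 ≤ l) :
    Filter.Tendsto
      (fun n : ℕ =>
        (∑ f ∈ Finset.Nat.antidiagonalTuple (l + 1) (n - l), ∏ i, (S (f i) : ℝ)) / (S n : ℝ))
      Filter.atTop (nhds ((l + 1) / 2 ^ l)) :=
  catalan_composition_sum_limit_general l
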